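/- arXiv:2503.15751 — 3 statements merged into one kernel-verified Lean document; each statement's English description precedes it below -/
import Mathlib

section
/- The type-III 3-cocycle ω_III on (ℤ/2)³ is cohomologically nontrivial: there exists no function β : G × G → ℂˣ such that for all g,h,k ∈ G, ω_III(g,h,k) = β(h,k)·β(gh,k)⁻¹·β(g,hk)·β(g,h)⁻¹. -/
/-- The group `G = (ℤ/2)³`. -/
abbrev G0 : Type := ZMod 2 × ZMod 2 × ZMod 2

/-- The type-III 3-cocycle `ω_III(g₁,g₂,g₃) = (-1)^{a₁·b₂·c₃}`, valued in `ℂˣ`. -/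
noncomputable def ωIII (g₁ g₂ g₃ : G0) : ℂˣ :=
  (-1 : ℂˣ) ^ (g₁.1.val * g₂.2.1.val * g₃.2.2.val)

/-!
For an abelian group, every 2-coboundary `dβ` satisfies
`dβ(x,y,z) dβ(y,z,x) dβ(z,x,y) = dβ(x,z,y) dβ(y,x,z) dβ(z,y,x)`: after using `g + h = h + g`,
both sides are the same product of values of `β` and their inverses. For the three standard
generators `e₁, e₂, e₃` of `(ℤ/2)³`, `ω_III` is `-1` on `(e₁,e₂,e₃)` and `1` on the five other
orderings, so the two sides differ.
-/

abbrev G0.e₁ : G0 := (1, 0, 0)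
abbrev G0.e₂ : G0 := (0, 1, 0)
abbrev G0.e₃ : G0 := (0, 0, 1)

section Coboundary

variable {A M : Type*} [AddCommMagma A] [CommGroup M]

def coboundary₂ (β : A → A → M) (g h k : A) : M :=
  β h k * (β (g + h) k)⁻¹ * β g (h + k) * (β g h)⁻¹

theorem coboundary₂_cyclic_prod_eq_anticyclic_prod (β : A → A → M) (x y z : A) :
    coboundary₂ β x y z * coboundary₂ β y z x * coboundary₂ β z x y =
      coboundary₂ β x z y * coboundary₂ β y x z * coboundary₂ β z y x := by
  simp only [coboundary₂, add_comm y x, add_comm z x, add_comm z y]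
  apply Additive.ofMul.injective
  simp only [ofMul_mul, ofMul_inv]
  abel

end Coboundary

open G0

theorem ωIII_cyclic_prod :
    ωIII e₁ e₂ e₃ * ωIII e₂ e₃ e₁ * ωIII e₃ e₁ e₂ = -1 := by
  simp [ωIII, ZMod.val_one]

theorem ωIII_anticyclic_prod :
    ωIII e₁ e₃ e₂ * ωIII e₂ e₁ e₃ * ωIII e₃ e₂ e₁ = 1 := by
  simp [ωIII]

/-- `ω_III` is cohomologically nontrivial: it is not the coboundary of any
`ℂˣ`-valued 2-cochain `β`. -/
theorem ωIII_not_coboundary :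
    ¬ ∃ β : G0 → G0 → ℂˣ,
      ∀ g h k : G0,
        ωIII g h k = β h k * (β (g + h) k)⁻¹ * β g (h + k) * (β g h)⁻¹ := by
  rintro ⟨β, hβ⟩
  have hω : ∀ g h k, coboundary₂ β g h k = ωIII g h k := fun g h k => (hβ g h k).symm
  have h := coboundary₂_cyclic_prod_eq_anticyclic_prod β e₁ e₂ e₃
  simp only [hω, ωIII_cyclic_prod, ωIII_anticyclic_prod] at h
  exact neg_units_ne_self 1 h
end

section
/- Let H = {(0,0,0),(1,1,0),(1,0,1),(0,1,1)} ⊆ (ℤ/2)³ be the subgroup generated by (1,1,0) and (1,0,1). Then the restriction of the type-III cocycle ω_III to H is a coboundary: there exists β : H × H → ℂˣ (which may be taken with values in the 4th roots of unity) such that ω_III(g,h,k) = β(h,k)·β(gh,k)⁻¹·β(g,hk)·β(g,h)⁻¹ for all g,h,k ∈ H. -/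
/-- The subgroup `H = {(0,0,0),(1,1,0),(1,0,1),(0,1,1)} ⊆ (ℤ/2)³`
generated by `(1,1,0)` and `(1,0,1)`. -/
def Hset : Set G0 := {(0, 0, 0), (1, 1, 0), (1, 0, 1), (0, 1, 1)}

/-! On `H` the coordinates satisfy `a = b + c`, so `a ∪ b ∪ c = a ∪ a ∪ c + a ∪ c ∪ c` there.
Lift the 1-cocycles `a, c : G → ℤ/2` to `{0, 1} ⊆ ℤ` and put `β(g, h) = i ^ (a(g) c(h))`. The lift
of a 1-cocycle is additive up to `a(g + h) = a(g) + a(h) - 2 a(g) a(h)`, and this defect makes the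
coboundary of `β` equal to `(-1) ^ (a ∪ a ∪ c - a ∪ c ∪ c)`, which is `ω_III` on `H`. -/

lemma ZMod.val_add_zmod_two (u v : ZMod 2) :
    ((u + v).val : ℤ) = u.val + v.val - 2 * (u.val * v.val) := by
  decide +revert

section valCupCochain

variable {A M : Type*} [AddZeroClass A] [CommGroup M]

def valCupCochain (ζ : M) (x z : A →+ ZMod 2) (g h : A) : M :=
  ζ ^ ((x g).val * (z h).val)

theorem valCupCochain_coboundary (ζ : M) (x z : A →+ ZMod 2) (g h k : A) :
    valCupCochain ζ x z h k * (valCupCochain ζ x z (g + h) k)⁻¹ *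
        valCupCochain ζ x z g (h + k) * (valCupCochain ζ x z g h)⁻¹ =
      (ζ ^ 2) ^ ((x g).val * (x h).val * (z k).val) *
        ((ζ ^ 2) ^ ((x g).val * (z h).val * (z k).val))⁻¹ := by
  simp only [valCupCochain, map_add, ← zpow_natCast, Nat.cast_mul, ZMod.val_add_zmod_two,
    Nat.cast_ofNat]
  group

theorem valCupCochain_pow_four {ζ : M} (hζ : ζ ^ 4 = 1) (x z : A →+ ZMod 2) (g h : A) :
    valCupCochain ζ x z g h ^ 4 = 1 := by
  rw [valCupCochain, ← pow_mul, mul_comm, pow_mul, hζ, one_pow]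

end valCupCochain

noncomputable def Complex.IUnit : ℂˣ := Units.mk0 Complex.I Complex.I_ne_zero

lemma Complex.IUnit_sq : Complex.IUnit ^ 2 = -1 := by
  ext; simp [Complex.IUnit]

lemma Complex.IUnit_pow_four : Complex.IUnit ^ 4 = 1 := by
  rw [show 4 = 2 * 2 from rfl, pow_mul, Complex.IUnit_sq, neg_one_sq]

/-- The restriction of `ω_III` to `H` is a coboundary, with a trivializing
2-cochain taking values in 4th roots of unity. -/
theorem ωIII_restricted_coboundary :
    ∃ β : G0 → G0 → ℂˣ,
      (∀ g h : G0, (β g h) ^ 4 = 1) ∧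
      ∀ g ∈ Hset, ∀ h ∈ Hset, ∀ k ∈ Hset,
        ωIII g h k = β h k * (β (g + h) k)⁻¹ * β g (h + k) * (β g h)⁻¹ := by
  let a : G0 →+ ZMod 2 := AddMonoidHom.fst _ _
  let c : G0 →+ ZMod 2 := (AddMonoidHom.snd _ _).comp (AddMonoidHom.snd _ _)
  refine ⟨valCupCochain Complex.IUnit a c, valCupCochain_pow_four Complex.IUnit_pow_four a c,
    fun g _ h hh k _ => ?_⟩
  rw [valCupCochain_coboundary, Complex.IUnit_sq]
  rcases hh with rfl | rfl | rfl | rfl <;> simp [ωIII, a, c, ← inv_pow, ← mul_pow]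
end

section
/- On (ℂ²)^{⊗4} with qubits 1,2,3,4, let A = X₁·CZ₂₃ and B = X₂·CZ₁₄ (these commuting products are well defined since X₁ commutes with CZ₂₃ and X₂ with CZ₁₄). Then A and B are involutions and their group commutator satisfies A·B·A⁻¹·B⁻¹ = ABAB = Z₃·Z₄, so on any state ψ with Z₃Z₄ψ = ψ one has ABψ = BAψ. -/
open Matrix

/-- Basis labels of four qubits. -/
abbrev Q4 : Type := Fin 2 × Fin 2 × Fin 2 × Fin 2

/-- Pauli-X on qubit 1. -/
noncomputable def X1 : Matrix Q4 Q4 ℂ :=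
  Matrix.of fun x y => if x.1 ≠ y.1 ∧ x.2 = y.2 then 1 else 0

/-- Pauli-X on qubit 2. -/
noncomputable def X2 : Matrix Q4 Q4 ℂ :=
  Matrix.of fun x y => if x.1 = y.1 ∧ x.2.1 ≠ y.2.1 ∧ x.2.2 = y.2.2 then 1 else 0

/-- Controlled-Z on qubits 2 and 3. -/
noncomputable def CZ23 : Matrix Q4 Q4 ℂ :=
  Matrix.of fun x y => if x = y then (-1 : ℂ) ^ (x.2.1.val * x.2.2.1.val) else 0

/-- Controlled-Z on qubits 1 and 4. -/
noncomputable def CZ14 : Matrix Q4 Q4 ℂ :=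
  Matrix.of fun x y => if x = y then (-1 : ℂ) ^ (x.1.val * x.2.2.2.val) else 0

/-- Pauli-Z on qubit 3. -/
noncomputable def Z3 : Matrix Q4 Q4 ℂ :=
  Matrix.of fun x y => if x = y then (-1 : ℂ) ^ x.2.2.1.val else 0

/-- Pauli-Z on qubit 4. -/
noncomputable def Z4 : Matrix Q4 Q4 ℂ :=
  Matrix.of fun x y => if x = y then (-1 : ℂ) ^ x.2.2.2.val else 0

noncomputable def E (σ : Equiv.Perm Q4) (d : Q4 → ℂ) : Matrix Q4 Q4 ℂ :=
  Matrix.of fun x y => if σ x = y then d x else 0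

lemma E_mul (σ τ : Equiv.Perm Q4) (d e : Q4 → ℂ) :
    E σ d * E τ e = E (σ.trans τ) (fun x => d x * e (σ x)) := by
  ext x y
  simp only [E, mul_apply, of_apply, Equiv.trans_apply]
  rw [Finset.sum_eq_single (σ x)]
  · simp; congr
  · intro b _ hb; simp [Ne.symm hb]
  · simp

lemma E_one : E 1 (fun _ => 1) = 1 := by
  ext x y
  simp [E, Matrix.one_apply, eq_comm]; congr

lemma E_congr {σ τ : Equiv.Perm Q4} {d e : Q4 → ℂ}
    (h1 : ∀ x, σ x = τ x) (h2 : ∀ x, d x = e x) : E σ d = E τ e := by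
  ext x y; simp only [E, of_apply, h1, h2]

def fl : Fin 2 ≃ Fin 2 := ⟨fun a => a + 1, fun a => a + 1, by decide, by decide⟩
def s1 : Equiv.Perm Q4 := fl.prodCongr (Equiv.refl _)
def s2 : Equiv.Perm Q4 := (Equiv.refl (Fin 2)).prodCongr (fl.prodCongr (Equiv.refl _))

noncomputable def d23 : Q4 → ℂ := fun x => (-1 : ℂ) ^ (x.2.1.val * x.2.2.1.val)
noncomputable def d14 : Q4 → ℂ := fun x => (-1 : ℂ) ^ (x.1.val * x.2.2.2.val)
noncomputable def z3 : Q4 → ℂ := fun x => (-1 : ℂ) ^ x.2.2.1.val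
noncomputable def z4 : Q4 → ℂ := fun x => (-1 : ℂ) ^ x.2.2.2.val

lemma X1_eq : X1 = E s1 (fun _ => 1) := by
  ext x y
  have : (x.1 ≠ y.1 ∧ x.2 = y.2) ↔ s1 x = y := by revert x y; decide
  simp only [X1, E, of_apply]
  rw [if_congr this rfl rfl]

lemma X2_eq : X2 = E s2 (fun _ => 1) := by
  ext x y
  have : (x.1 = y.1 ∧ x.2.1 ≠ y.2.1 ∧ x.2.2 = y.2.2) ↔ s2 x = y := by revert x y; decide
  simp only [X2, E, of_apply]
  rw [if_congr this rfl rfl]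

lemma CZ23_eq : CZ23 = E 1 d23 := by
  ext x y; simp only [CZ23, E, of_apply, Equiv.Perm.one_apply, d23]; congr

lemma CZ14_eq : CZ14 = E 1 d14 := by
  ext x y; simp only [CZ14, E, of_apply, Equiv.Perm.one_apply, d14]; congr

lemma Z3_eq : Z3 = E 1 z3 := by
  ext x y; simp only [Z3, E, of_apply, Equiv.Perm.one_apply, z3]; congr

lemma Z4_eq : Z4 = E 1 z4 := by
  ext x y; simp only [Z4, E, of_apply, Equiv.Perm.one_apply, z4]; congr

/-- `A = X₁·CZ₂₃`. -/
noncomputable def Aop : Matrix Q4 Q4 ℂ := X1 * CZ23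

/-- `B = X₂·CZ₁₄`. -/
noncomputable def Bop : Matrix Q4 Q4 ℂ := X2 * CZ14

lemma hA : Aop = E s1 d23 := by
  rw [Aop, X1_eq, CZ23_eq, E_mul]
  refine E_congr (by decide) ?_
  rintro ⟨a,b,c,d⟩
  fin_cases a <;> fin_cases b <;> fin_cases c <;> fin_cases d <;>
    norm_num [s1, fl, d23, Equiv.prodCongr]

lemma hB : Bop = E s2 d14 := by
  rw [Bop, X2_eq, CZ14_eq, E_mul]
  refine E_congr (by decide) ?_
  rintro ⟨a,b,c,d⟩
  fin_cases a <;> fin_cases b <;> fin_cases c <;> fin_cases d <;>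
    norm_num [s2, fl, d14, Equiv.prodCongr]

lemma hAA : Aop * Aop = 1 := by
  rw [hA, E_mul, ← E_one]
  refine E_congr (by decide) ?_
  rintro ⟨a,b,c,d⟩
  fin_cases a <;> fin_cases b <;> fin_cases c <;> fin_cases d <;>
    norm_num [s1, fl, d23, Equiv.prodCongr]

lemma hBB : Bop * Bop = 1 := by
  rw [hB, E_mul, ← E_one]
  refine E_congr (by decide) ?_
  rintro ⟨a,b,c,d⟩
  fin_cases a <;> fin_cases b <;> fin_cases c <;> fin_cases d <;>
    norm_num [s2, fl, d14, Equiv.prodCongr]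

lemma hABAB : Aop * Bop * Aop * Bop = Z3 * Z4 := by
  rw [hA, hB, E_mul, E_mul, E_mul, Z3_eq, Z4_eq, E_mul]
  refine E_congr (by decide) ?_
  rintro ⟨a,b,c,d⟩
  fin_cases a <;> fin_cases b <;> fin_cases c <;> fin_cases d <;>
    norm_num [s1, s2, fl, d23, d14, z3, z4, Equiv.prodCongr, show ((2:Fin 2):ℕ) = 0 from rfl, show ((3:Fin 2):ℕ) = 1 from rfl, show ((1+1:Fin 2):ℕ) = 0 from rfl, show ((1+1+1:Fin 2):ℕ) = 1 from rfl]

lemma hSwap : Aop * Bop = Bop * Aop * (Z3 * Z4) := by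
  rw [hA, hB, Z3_eq, Z4_eq, E_mul, E_mul, E_mul, E_mul]
  refine E_congr (by decide) ?_
  rintro ⟨a,b,c,d⟩
  fin_cases a <;> fin_cases b <;> fin_cases c <;> fin_cases d <;>
    norm_num [s1, s2, fl, d23, d14, z3, z4, Equiv.prodCongr, show ((2:Fin 2):ℕ) = 0 from rfl, show ((3:Fin 2):ℕ) = 1 from rfl, show ((1+1:Fin 2):ℕ) = 0 from rfl, show ((1+1+1:Fin 2):ℕ) = 1 from rfl]

/-- The Clifford vertex stabilizers `A = X₁CZ₂₃` and `B = X₂CZ₁₄` are well-defined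
commuting products, involutions, their group commutator is `Z₃Z₄` (equivalently
`ABAB = Z₃Z₄`), and they commute on the `+1`-eigenspace of `Z₃Z₄`. -/
theorem clifford_stabilizer_commutator :
    X1 * CZ23 = CZ23 * X1 ∧
    X2 * CZ14 = CZ14 * X2 ∧
    Aop * Aop = 1 ∧
    Bop * Bop = 1 ∧
    Aop * Bop * Aop⁻¹ * Bop⁻¹ = Z3 * Z4 ∧
    Aop * Bop * Aop * Bop = Z3 * Z4 ∧
    (∀ ψ : Q4 → ℂ, (Z3 * Z4).mulVec ψ = ψ →
      (Aop * Bop).mulVec ψ = (Bop * Aop).mulVec ψ) := by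
  have hAinv : Aop⁻¹ = Aop := Matrix.inv_eq_right_inv hAA
  have hBinv : Bop⁻¹ = Bop := Matrix.inv_eq_right_inv hBB
  refine ⟨?_, ?_, hAA, hBB, ?_, hABAB, ?_⟩
  · rw [X1_eq, CZ23_eq, E_mul, E_mul]
    refine E_congr (by decide) ?_
    rintro ⟨a,b,c,d⟩
    fin_cases a <;> fin_cases b <;> fin_cases c <;> fin_cases d <;>
      norm_num [s1, fl, d23, Equiv.prodCongr]
  · rw [X2_eq, CZ14_eq, E_mul, E_mul]
    refine E_congr (by decide) ?_
    rintro ⟨a,b,c,d⟩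
    fin_cases a <;> fin_cases b <;> fin_cases c <;> fin_cases d <;>
      norm_num [s2, fl, d14, Equiv.prodCongr]
  · rw [hAinv, hBinv]; exact hABAB
  · intro ψ h
    rw [hSwap, ← Matrix.mulVec_mulVec, h]
end
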